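/- arXiv:1501.06783 — 2 statements merged into one kernel-verified Lean document; each statement's English description precedes it below -/
import Mathlib

section
/- If a probability distribution D on [n] is ε-close in total variation distance to some monotone non-increasing distribution, then its flattening D̄ (with respect to any fixed interval partition of [n]) is also ε-close to some monotone non-increasing distribution. -/
/-! Take a monotone distribution `P` witnessing the closeness of `D` and flatten it with respect
to the same partition. Averaging over the blocks keeps `P` a non-increasing distribution, and,
being a linear contraction in `ℓ¹`, does not increase the distance: `tv D̄ P̄ ≤ tv D P ≤ ε`. -/

open Finset

noncomputable def tv {n : ℕ} (D P : Fin n → ℝ) : ℝ := (∑ i, |D i - P i|) / 2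

def IsDist {n : ℕ} (D : Fin n → ℝ) : Prop := (∀ i, 0 ≤ D i) ∧ ∑ i, D i = 1

noncomputable def flatten {n ℓ : ℕ} (c : Fin n → Fin ℓ) (D : Fin n → ℝ) : Fin n → ℝ :=
  fun i => (∑ j ∈ univ.filter (fun j => c j = c i), D j) /
    ((univ.filter (fun j => c j = c i)).card : ℝ)

section Flatten

variable {n ℓ : ℕ} (c : Fin n → Fin ℓ)

lemma flatten_sub (f g : Fin n → ℝ) : flatten c (f - g) = flatten c f - flatten c g := by
  ext i
  simp only [flatten, Pi.sub_apply, sum_sub_distrib, sub_div]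

lemma flatten_nonneg {f : Fin n → ℝ} (hf : 0 ≤ f) : 0 ≤ flatten c f := fun _ =>
  div_nonneg (sum_nonneg fun j _ => hf j) (Nat.cast_nonneg _)

lemma abs_flatten_le (f : Fin n → ℝ) (i : Fin n) : |flatten c f i| ≤ flatten c (|f|) i := by
  simp only [flatten, abs_div, Nat.abs_cast, Pi.abs_apply]
  exact div_le_div_of_nonneg_right (abs_sum_le_sum_abs _ _) (Nat.cast_nonneg _)

lemma sum_flatten_fiber (f : Fin n → ℝ) (k : Fin ℓ) :
    ∑ i ∈ univ.filter (fun i => c i = k), flatten c f i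
      = ∑ i ∈ univ.filter (fun i => c i = k), f i := by
  have hconst : ∀ i ∈ univ.filter (fun i => c i = k), flatten c f i
      = (∑ j ∈ univ.filter (fun j => c j = k), f j) / #(univ.filter (fun j => c j = k)) := by
    intro i hi
    rw [(mem_filter.mp hi).2.symm]
    rfl
  rw [sum_congr rfl hconst, sum_const, nsmul_eq_mul]
  refine mul_div_cancel_of_imp' fun hcard => ?_
  rw [card_eq_zero.mp (Nat.cast_eq_zero.mp hcard), sum_empty]

lemma sum_flatten (f : Fin n → ℝ) : ∑ i, flatten c f i = ∑ i, f i := by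
  rw [← sum_fiberwise univ c, ← sum_fiberwise univ c f]
  exact sum_congr rfl fun k _ => sum_flatten_fiber c f k

lemma sum_abs_flatten_le (f : Fin n → ℝ) : ∑ i, |flatten c f i| ≤ ∑ i, |f i| :=
  calc ∑ i, |flatten c f i| ≤ ∑ i, flatten c (|f|) i := sum_le_sum fun i _ => abs_flatten_le c f i
    _ = ∑ i, |f i| := sum_flatten c _

lemma tv_flatten_le (f g : Fin n → ℝ) : tv (flatten c f) (flatten c g) ≤ tv f g := by
  unfold tv
  gcongr ?_ / _
  simpa only [flatten_sub, Pi.sub_apply] using sum_abs_flatten_le c (f - g)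

lemma IsDist.flatten {P : Fin n → ℝ} (hP : IsDist P) : IsDist (flatten c P) :=
  ⟨flatten_nonneg c hP.1, (sum_flatten c P).trans hP.2⟩

end Flatten

lemma sum_div_card_le_sum_div_card {α : Type*} {A B : Finset α} {f : α → ℝ}
    (hA : A.Nonempty) (hB : B.Nonempty) (h : ∀ a ∈ A, ∀ b ∈ B, f b ≤ f a) :
    (∑ b ∈ B, f b) / #B ≤ (∑ a ∈ A, f a) / #A := by
  rw [div_le_div_iff₀ (by exact_mod_cast hB.card_pos) (by exact_mod_cast hA.card_pos),
    ← nsmul_eq_mul', ← nsmul_eq_mul', ← sum_const, ← sum_const, sum_comm]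
  exact sum_le_sum fun b hb => sum_le_sum fun a ha => h a ha b hb

lemma Antitone.flatten {n ℓ : ℕ} {c : Fin n → Fin ℓ} (hc : Monotone c) {P : Fin n → ℝ}
    (hP : Antitone P) : Antitone (flatten c P) := by
  intro i i' hii'
  rcases (hc hii').eq_or_lt with hci | hci
  · simp only [_root_.flatten, hci, le_refl]
  · refine sum_div_card_le_sum_div_card ⟨i, by simp⟩ ⟨i', by simp⟩ fun a ha b hb => hP ?_
    simp only [mem_filter] at ha hb
    exact (hc.reflect_lt (ha.2 ▸ hb.2 ▸ hci)).le

theorem flatten_close_to_monotone_general {n ℓ : ℕ} (c : Fin n → Fin ℓ) (hmono : Monotone c)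
    (D : Fin n → ℝ) (ε : ℝ)
    (hclose : ∃ P : Fin n → ℝ, IsDist P ∧ Antitone P ∧ tv D P ≤ ε) :
    ∃ P' : Fin n → ℝ, IsDist P' ∧ Antitone P' ∧ tv (flatten c D) P' ≤ ε := by
  obtain ⟨P, hP, hPanti, hPtv⟩ := hclose
  exact ⟨flatten c P, hP.flatten c, hPanti.flatten hmono, (tv_flatten_le c D P).trans hPtv⟩

theorem flatten_close_to_monotone {n ℓ : ℕ} (c : Fin n → Fin ℓ) (hmono : Monotone c)
    (hsurj : Function.Surjective c) (D : Fin n → ℝ) (ε : ℝ)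
    (hD : IsDist D)
    (hclose : ∃ P : Fin n → ℝ, IsDist P ∧ Antitone P ∧ tv D P ≤ ε) :
    ∃ P' : Fin n → ℝ, IsDist P' ∧ Antitone P' ∧ tv (flatten c D) P' ≤ ε :=
  flatten_close_to_monotone_general c hmono D ε hclose
end

section
/- Let D be a probability distribution on [n] with n even, and define the mirrored distribution D⁻ by D⁻(i) = D(n+1−i). If both D and D⁻ are ε/3-close in total variation distance to some monotone non-increasing distribution, then D is ε-close to the uniform distribution on [n]. -/
open Finset

/-! Let `P` be a non-increasing distribution close to `D`, and `B` the mirror image of the one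
close to `D⁻`, a non-decreasing distribution close to `D`; so `P` and `B` are `2ε/3`-close. The
points where `P` exceeds `1/n` form an initial segment `S`, on which the non-decreasing `B` has at
most its average mass `|S|/n` (Chebyshev's sum inequality). Hence
`tv(P, U) = P(S) - |S|/n ≤ P(S) - B(S) ≤ tv(P, B)`, and `tv(D, U) ≤ ε/3 + 2ε/3`. -/

lemma tv_comm {n : ℕ} (f g : Fin n → ℝ) : tv f g = tv g f := by
  simp only [tv, abs_sub_comm]

lemma tv_triangle {n : ℕ} (f g h : Fin n → ℝ) : tv f h ≤ tv f g + tv g h := by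
  simp only [tv, ← add_div, ← sum_add_distrib]
  gcongr with i
  exact abs_sub_le _ _ _

lemma tv_comp_rev {n : ℕ} (f g : Fin n → ℝ) :
    tv (fun i => f i.rev) (fun i => g i.rev) = tv f g := by
  simp only [tv]
  congr 1
  exact Fintype.sum_equiv Fin.revPerm _ _ fun _ => rfl

lemma tv_eq_sum_posPart {n : ℕ} {f g : Fin n → ℝ} (hfg : ∑ i, f i = ∑ i, g i) :
    tv f g = ∑ i, (f i - g i)⁺ := by
  have hsum : ∑ i, (f i - g i) = 0 := by rw [sum_sub_distrib, hfg, sub_self]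
  have hneg : ∑ i, (f i - g i)⁻ = ∑ i, (f i - g i)⁺ := by
    rw [eq_comm, ← sub_eq_zero, ← sum_sub_distrib, ← hsum]
    simp only [posPart_sub_negPart]
  rw [tv, ← div_left_inj' (two_ne_zero' ℝ)]
  simp only [← posPart_add_negPart, sum_add_distrib, hneg]
  ring

lemma sum_sub_le_tv {n : ℕ} {f g : Fin n → ℝ} (hfg : ∑ i, f i = ∑ i, g i)
    (S : Finset (Fin n)) : ∑ i ∈ S, (f i - g i) ≤ tv f g :=
  calc ∑ i ∈ S, (f i - g i)
      ≤ ∑ i ∈ S, (f i - g i)⁺ := sum_le_sum fun _ _ => le_posPart _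
    _ ≤ ∑ i, (f i - g i)⁺ := sum_le_univ_sum_of_nonneg fun _ => posPart_nonneg _
    _ = tv f g := (tv_eq_sum_posPart hfg).symm

lemma tv_eq_sum_filter_lt {n : ℕ} {f g : Fin n → ℝ} (hfg : ∑ i, f i = ∑ i, g i) :
    tv f g = ∑ i ∈ univ.filter (fun i => g i < f i), (f i - g i) := by
  simp only [tv_eq_sum_posPart hfg, sum_filter, posPart_eq_ite_lt, sub_pos]

theorem Monotone.card_mul_sum_le_card_mul_sum_of_isLowerSet {ι : Type*} [Fintype ι]
    [LinearOrder ι] {B : ι → ℝ} (hB : Monotone B) {S : Finset ι}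
    (hS : IsLowerSet (S : Set ι)) :
    Fintype.card ι * ∑ i ∈ S, B i ≤ #S * ∑ i, B i := by
  have hind : Antitone fun i => if i ∈ S then (1 : ℝ) else 0 := by
    intro i j hij
    by_cases hj : j ∈ S
    · have hi : i ∈ S := hS hij hj
      simp [hi, hj]
    · simp only [hj, if_false]
      split_ifs <;> norm_num
  simpa [sum_boole_mul, sum_boole] using (hind.antivary hB).card_mul_sum_le_sum_mul_sum

theorem tv_uniform_le_of_antitone_of_monotone {n : ℕ} {P B : Fin n → ℝ} (hP : Antitone P)
    (hB : Monotone B) (hPsum : ∑ i, P i = 1) (hBsum : ∑ i, B i = 1) :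
    tv P (fun _ => 1 / (n : ℝ)) ≤ tv P B := by
  have hn : (n : ℝ) ≠ 0 := by
    rintro hn
    obtain rfl := Nat.cast_eq_zero.mp hn
    simp at hPsum
  have hUsum : ∑ _i : Fin n, 1 / (n : ℝ) = 1 := by simp [hn]
  set S := univ.filter fun i => 1 / (n : ℝ) < P i
  have hS : IsLowerSet (S : Set (Fin n)) := fun i j hji hi => by
    simp only [S, coe_filter, mem_univ, true_and, Set.mem_ofPred_eq] at hi ⊢
    exact hi.trans_le (hP hji)
  have hBS : ∑ i ∈ S, B i ≤ ∑ _i ∈ S, 1 / (n : ℝ) := by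
    have := hB.card_mul_sum_le_card_mul_sum_of_isLowerSet hS
    rw [Fintype.card_fin, hBsum, mul_one] at this
    rw [sum_const, nsmul_eq_mul, mul_one_div, le_div_iff₀' (by positivity)]
    exact this
  calc tv P (fun _ => 1 / (n : ℝ)) = ∑ i ∈ S, (P i - 1 / n) :=
        tv_eq_sum_filter_lt (by rw [hPsum, hUsum])
    _ = ∑ i ∈ S, (P i - B i) + (∑ i ∈ S, B i - ∑ _i ∈ S, 1 / (n : ℝ)) := by
      simp only [sum_sub_distrib]; ring
    _ ≤ tv P B := by linarith [sum_sub_le_tv (hPsum.trans hBsum.symm) S]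

theorem mirror_close_monotone_implies_close_uniform_general {n : ℕ}
    (D : Fin n → ℝ) (ε : ℝ)
    (h1 : ∃ P : Fin n → ℝ, IsDist P ∧ Antitone P ∧ tv D P ≤ ε / 3)
    (h2 : ∃ P : Fin n → ℝ, IsDist P ∧ Antitone P ∧ tv (fun i => D i.rev) P ≤ ε / 3) :
    tv D (fun _ => 1 / (n : ℝ)) ≤ ε := by
  obtain ⟨P, ⟨-, hPsum⟩, hP, hDP⟩ := h1
  obtain ⟨Q, ⟨-, hQsum⟩, hQ, hDQ⟩ := h2
  set B : Fin n → ℝ := fun i => Q i.rev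
  have hB : Monotone B := hQ.comp Fin.rev_anti
  have hBsum : ∑ i, B i = 1 := (Equiv.sum_comp Fin.revPerm Q).trans hQsum
  have hDB : tv D B ≤ ε / 3 := by
    simpa only [Fin.rev_rev] using (tv_comp_rev (fun i => D i.rev) Q).trans_le hDQ
  calc tv D (fun _ => 1 / (n : ℝ))
      ≤ tv D P + tv P (fun _ => 1 / (n : ℝ)) := tv_triangle _ _ _
    _ ≤ tv D P + tv P B := by
      gcongr; exact tv_uniform_le_of_antitone_of_monotone hP hB hPsum hBsum
    _ ≤ tv D P + (tv P D + tv D B) := by gcongr; exact tv_triangle _ _ _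
    _ ≤ ε := by rw [tv_comm P D]; linarith

theorem mirror_close_monotone_implies_close_uniform {n : ℕ} (hn : Even n)
    (D : Fin n → ℝ) (hD : IsDist D) (ε : ℝ)
    (h1 : ∃ P : Fin n → ℝ, IsDist P ∧ Antitone P ∧ tv D P ≤ ε / 3)
    (h2 : ∃ P : Fin n → ℝ, IsDist P ∧ Antitone P ∧ tv (fun i => D i.rev) P ≤ ε / 3) :
    tv D (fun _ => 1 / (n : ℝ)) ≤ ε :=
  mirror_close_monotone_implies_close_uniform_general D ε h1 h2
end
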